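/- arXiv:1102.0980 — 7 statements merged into one kernel-verified Lean document; each statement's English description precedes it below -/
import Mathlib

section
/- Let V be a finite nonempty type and R : V → V → Prop an irreflexive relation that is strongly connected, i.e., for all a, b : V, Relation.ReflTransGen R a b. Then R is word-representable: there exist ℓ ≥ 1 and a surjective word ω : Fin ℓ → V with E ω = R. -/
/-!
Strong connectivity lets one string any finitely many `R`-chains together into a single
`R`-chain, joining the last letter of one to the first letter of the next by an `R`-path; each
chain then occurs as a factor. Applied to all one-letter words and all edges `[a, b]` of `R`, this
gives an `R`-chain using every letter in which every edge of `R` is a factor. Its adjacent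
distinct letters are then exactly the edges of `R`, using irreflexivity.
-/

/-- The edge relation of the word-graph of `ω`: ordered pairs of distinct adjacent letters. -/
def WordEdge {ℓ : ℕ} {α : Type*} (ω : Fin ℓ → α) (a b : α) : Prop :=
  a ≠ b ∧ ∃ i : ℕ, ∃ h : i + 1 < ℓ, ω ⟨i, Nat.lt_of_succ_lt h⟩ = a ∧ ω ⟨i + 1, h⟩ = b

namespace List

variable {α : Type*} {R : α → α → Prop}

theorem exists_isChain_prefix_suffix_of_reflTransGen {a b : α}
    (hab : Relation.ReflTransGen R a b) {l w : List α}
    (hl : (l ++ [a]).IsChain R) (hw : (b :: w).IsChain R) :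
    ∃ m : List α, m.IsChain R ∧ l ++ [a] <+: m ∧ b :: w <:+ m := by
  induction hab using Relation.ReflTransGen.head_induction_on generalizing l with
  | refl => exact ⟨l ++ b :: w, isChain_split.mpr ⟨hl, hw⟩, ⟨w, by simp⟩, suffix_append _ _⟩
  | head hac _ ih =>
    obtain ⟨m, hm, hpre, hsuf⟩ := ih (hl.append (isChain_singleton _) (by simpa using hac))
    exact ⟨m, hm, (prefix_append _ _).trans hpre, hsuf⟩

theorem exists_isChain_prefix_suffix (hconn : ∀ a b, Relation.ReflTransGen R a b)
    {l w : List α} (hl : l.IsChain R) (hw : w.IsChain R) :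
    ∃ m : List α, m.IsChain R ∧ l <+: m ∧ w <:+ m := by
  rcases l.eq_nil_or_concat with rfl | ⟨l, a, rfl⟩
  · exact ⟨w, hw, nil_prefix, suffix_refl w⟩
  cases w with
  | nil => exact ⟨_, hl, prefix_refl _, nil_suffix⟩
  | cons b w =>
    rw [concat_eq_append] at hl ⊢
    exact exists_isChain_prefix_suffix_of_reflTransGen (hconn a b) hl hw

theorem exists_isChain_forall_infix (hconn : ∀ a b, Relation.ReflTransGen R a b)
    {S : Set (List α)} (hS : S.Finite) (hchain : ∀ w ∈ S, w.IsChain R) :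
    ∃ m : List α, m.IsChain R ∧ ∀ w ∈ S, w <:+: m := by
  induction S, hS using Set.Finite.induction_on with
  | empty => exact ⟨[], isChain_nil, by simp⟩
  | @insert w S _ _ ih =>
    obtain ⟨m, hm, hinfix⟩ := ih fun v hv => hchain v (Set.mem_insert_of_mem w hv)
    obtain ⟨m', hm', hpre, hsuf⟩ :=
      exists_isChain_prefix_suffix hconn hm (hchain w (Set.mem_insert w S))
    refine ⟨m', hm', ?_⟩
    rintro v (rfl | hv)
    · exact hsuf.isInfix
    · exact (hinfix v hv).trans hpre.isInfix

end List

theorem wordEdge_get_iff {α : Type*} {l : List α} {a b : α} :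
    WordEdge l.get a b ↔ a ≠ b ∧ [a, b] <:+: l := by
  rw [WordEdge, List.infix_iff_getElem?]
  refine and_congr_right fun _ => ⟨?_, ?_⟩
  · rintro ⟨i, hi, rfl, rfl⟩
    refine ⟨i, by simp only [List.length_cons, List.length_nil]; omega, fun j hj => ?_⟩
    simp only [List.length_cons, List.length_nil] at hj
    interval_cases j <;> simp [Nat.add_comm 1]
  · rintro ⟨i, hi, h⟩
    simp only [List.length_cons, List.length_nil] at hi
    have ha := h 0 (by simp)
    have hb := h 1 (by simp)
    simp only [List.getElem?_eq_some_iff] at ha hb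
    exact ⟨i, by omega, by simpa using ha.2, by simpa [Nat.add_comm 1] using hb.2⟩

/-- Every strongly connected irreflexive relation on a finite nonempty type is
word-representable. -/
theorem strongly_connected_representable {V : Type*} [Fintype V] [Nonempty V]
    (R : V → V → Prop) (hirr : ∀ v, ¬ R v v)
    (hconn : ∀ a b : V, Relation.ReflTransGen R a b) :
    ∃ ℓ : ℕ, 1 ≤ ℓ ∧ ∃ ω : Fin ℓ → V, Function.Surjective ω ∧ WordEdge ω = R := by
  have hfin : {w : List V | w.length ≤ 2 ∧ w.IsChain R}.Finite :=
    (List.finite_length_le V 2).subset fun _ hw => hw.1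
  obtain ⟨m, hm, hinfix⟩ := List.exists_isChain_forall_infix hconn hfin fun _ hw => hw.2
  have hmem (v : V) : v ∈ m :=
    (List.singleton_infix_iff v m).mp (hinfix [v] ⟨by simp, List.isChain_singleton v⟩)
  refine ⟨m.length, List.length_pos_of_mem (hmem (Classical.arbitrary V)), m.get,
    fun v => List.mem_iff_get.mp (hmem v), ?_⟩
  ext a b
  rw [wordEdge_get_iff]
  exact ⟨fun ⟨_, hab⟩ => List.isChain_pair.mp (hm.infix hab),
    fun hab => ⟨fun h => hirr a (h ▸ hab), hinfix [a, b] ⟨by simp, List.isChain_pair.mpr hab⟩⟩⟩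
end

section
/- For every ℓ ≥ 1, every type α, and every word ω : Fin ℓ → α, the word-graph G_ω is strongly connected if and only if G_ω has no bridge. -/
/-- The word-graph of `ω` is strongly connected. -/
def StronglyConnectedWord {ℓ : ℕ} {α : Type*} (ω : Fin ℓ → α) : Prop :=
  ∀ a ∈ Set.range ω, ∀ b ∈ Set.range ω, Relation.ReflTransGen (WordEdge ω) a b

/-- `(a, b)` is a bridge of the word-graph of `ω`: a unidirectional edge whose removal
disconnects (in the weak sense) the word-graph on the alphabet `Set.range ω`. -/
def IsBridge {ℓ : ℕ} {α : Type*} (ω : Fin ℓ → α) (a b : α) : Prop :=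
  WordEdge ω a b ∧ ¬ WordEdge ω b a ∧
    ∃ c ∈ Set.range ω, ∃ d ∈ Set.range ω,
      ¬ Relation.ReflTransGen
        (fun x y => (WordEdge ω x y ∧ ¬(x = a ∧ y = b)) ∨
                    (WordEdge ω y x ∧ ¬(y = a ∧ x = b))) c d


/-!
If the word-graph is strongly connected, every edge `(a, b)` lies on a cycle: a path from `b`
back to `a` can be taken to avoid `(a, b)`, so deleting that edge leaves `a` and `b` weakly
connected and no bridge can exist. Conversely, if some letter `ω p` cannot reach `ω q`, let `S` be
the set of letters that reach `ω q`. Since `S` is closed under predecessors, the positions of the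
word carrying a letter of `S` form an initial segment, so exactly one adjacent pair
`(ω i, ω (i + 1))` leaves `S`. This is the only edge leaving `S` and none enters it, so it is a
bridge separating `ω q` from `ω p`.
-/

open Relation

section DeleteEdge

variable {α : Type*} {r : α → α → Prop} {a b x y : α}

def DeleteEdge (r : α → α → Prop) (a b : α) (x y : α) : Prop :=
  r x y ∧ ¬(x = a ∧ y = b)

theorem reflTransGen_deleteEdge_to_source (h : ReflTransGen r x a) :
    ReflTransGen (DeleteEdge r a b) x a := by
  induction h using ReflTransGen.head_induction_on with
  | refl => rfl
  | @head x z hxz _ ih =>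
    by_cases hab : x = a ∧ z = b
    · rw [hab.1]
    · exact .head ⟨hxz, hab⟩ ih

theorem reflTransGen_symmGen_deleteEdge_of_reflTransGen (hba : ReflTransGen r b a)
    (h : ReflTransGen r x y) : ReflTransGen (SymmGen (DeleteEdge r a b)) x y := by
  have hab : ReflTransGen (SymmGen (DeleteEdge r a b)) a b :=
    Std.Symm.symm _ _ <|
      ReflTransGen.mono (fun _ _ => SymmGen.of_rel) _ _ (reflTransGen_deleteEdge_to_source hba)
  refine h.lift' id fun u v huv => ?_
  by_cases he : u = a ∧ v = b
  · rwa [he.1, he.2]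
  · exact .single (.of_rel ⟨huv, he⟩)

theorem invariant_of_reflTransGen_symmGen_deleteEdge {S : α → Prop}
    (hpred : ∀ ⦃u v⦄, r u v → S v → S u) (hexit : ∀ ⦃u v⦄, r u v → S u → ¬ S v → u = a ∧ v = b)
    (hx : S x) (h : ReflTransGen (SymmGen (DeleteEdge r a b)) x y) : S y := by
  induction h with
  | refl => exact hx
  | @tail u v _ huv ih =>
    rcases huv with ⟨huv, hne⟩ | ⟨hvu, -⟩
    · by_contra hv
      exact hne (hexit huv ih hv)
    · exact hpred hvu ih

end DeleteEdge

theorem Antitone.lt_of_not {β : Type*} [LinearOrder β] {p : β → Prop} (hp : Antitone p) {i j : β}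
    (hi : p i) (hj : ¬ p j) : i < j :=
  lt_of_not_ge fun hji => hj (hp hji hi)

theorem Nat.exists_and_not_succ_of_not {p : ℕ → Prop} {n : ℕ} (h0 : p 0) (hn : ¬ p n) :
    ∃ i, p i ∧ ¬ p (i + 1) := by
  by_contra! hsucc
  induction n with
  | zero => exact hn h0
  | succ n ih => exact hn (hsucc n (by_contra ih))

section Word

variable {ℓ : ℕ} {α : Type*} (ω : Fin ℓ → α) {S : α → Prop}

theorem WordEdge.mem_range {a b : α} (h : WordEdge ω a b) :
    a ∈ Set.range ω ∧ b ∈ Set.range ω := by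
  obtain ⟨-, i, hi, rfl, rfl⟩ := h
  exact ⟨⟨_, rfl⟩, ⟨_, rfl⟩⟩

theorem antitone_of_wordEdge_pred_closed (hS : ∀ ⦃u v⦄, WordEdge ω u v → S v → S u) :
    Antitone fun i => ∃ h : i < ℓ, S (ω ⟨i, h⟩) := by
  refine antitone_nat_of_succ_le fun i ⟨hi, hSi⟩ => ⟨Nat.lt_of_succ_lt hi, ?_⟩
  by_cases he : ω ⟨i, Nat.lt_of_succ_lt hi⟩ = ω ⟨i + 1, hi⟩
  · rwa [he]
  · exact hS ⟨he, i, hi, rfl, rfl⟩ hSi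

theorem wordEdge_exit_unique (hS : ∀ ⦃u v⦄, WordEdge ω u v → S v → S u) {i : ℕ}
    (hi : i + 1 < ℓ) (hin : S (ω ⟨i, Nat.lt_of_succ_lt hi⟩)) (hout : ¬ S (ω ⟨i + 1, hi⟩))
    ⦃u v : α⦄ (huv : WordEdge ω u v) (hu : S u) (hv : ¬ S v) :
    u = ω ⟨i, Nat.lt_of_succ_lt hi⟩ ∧ v = ω ⟨i + 1, hi⟩ := by
  obtain ⟨-, j, hj, rfl, rfl⟩ := huv
  have hg := antitone_of_wordEdge_pred_closed ω hS
  have hji : j ≤ i := Nat.le_of_lt_succ <| hg.lt_of_not ⟨_, hu⟩ fun ⟨_, h⟩ => hout h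
  have hij : i ≤ j := Nat.le_of_lt_succ <| hg.lt_of_not ⟨_, hin⟩ fun ⟨_, h⟩ => hv h
  obtain rfl := le_antisymm hji hij
  exact ⟨rfl, rfl⟩

theorem not_isBridge_of_stronglyConnectedWord (h : StronglyConnectedWord ω) (a b : α) :
    ¬ IsBridge ω a b := by
  rintro ⟨hab, -, c, hc, d, hd, hcd⟩
  exact hcd <| reflTransGen_symmGen_deleteEdge_of_reflTransGen
    (h b hab.mem_range.2 a hab.mem_range.1) (h c hc d hd)

theorem exists_isBridge_of_not_reflTransGen {p q : Fin ℓ}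
    (hpq : ¬ ReflTransGen (WordEdge ω) (ω p) (ω q)) : ∃ a b, IsBridge ω a b := by
  set S := fun x => ReflTransGen (WordEdge ω) x (ω q)
  have hS : ∀ ⦃u v⦄, WordEdge ω u v → S v → S u := fun _ _ => .head
  set g : ℕ → Prop := fun i => ∃ h : i < ℓ, S (ω ⟨i, h⟩)
  have hg : Antitone g := antitone_of_wordEdge_pred_closed ω hS
  have hp : ¬ g p := fun ⟨_, h⟩ => hpq h
  obtain ⟨i, ⟨hi, hin⟩, hnext⟩ :=
    Nat.exists_and_not_succ_of_not (hg (Nat.zero_le q) ⟨q.2, .refl⟩) hp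
  have hi1 : i + 1 < ℓ := Nat.lt_of_le_of_lt (hg.lt_of_not ⟨hi, hin⟩ hp) p.2
  have hout : ¬ S (ω ⟨i + 1, hi1⟩) := fun h => hnext ⟨hi1, h⟩
  have hne : ω ⟨i, hi⟩ ≠ ω ⟨i + 1, hi1⟩ := fun he => hout (he ▸ hin)
  refine ⟨_, _, ⟨hne, i, hi1, rfl, rfl⟩, fun hba => hout (hS hba hin),
    ω q, ⟨q, rfl⟩, ω p, ⟨p, rfl⟩, fun hqp => hpq ?_⟩
  exact invariant_of_reflTransGen_symmGen_deleteEdge (S := S) hS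
    (wordEdge_exit_unique ω hS hi1 hin hout) .refl hqp

end Word

theorem stronglyConnected_iff_no_bridge_general {ℓ : ℕ} {α : Type*} (ω : Fin ℓ → α) :
    StronglyConnectedWord ω ↔ ¬ ∃ a b : α, IsBridge ω a b := by
  refine ⟨fun h ⟨a, b, hab⟩ => not_isBridge_of_stronglyConnectedWord ω h a b hab, ?_⟩
  rintro h _ ⟨p, rfl⟩ _ ⟨q, rfl⟩
  by_contra hpq
  exact h (exists_isBridge_of_not_reflTransGen ω hpq)

/-- A word-graph is strongly connected iff it has no bridge. -/
theorem stronglyConnected_iff_no_bridge {ℓ : ℕ} {α : Type*} (hℓ : 1 ≤ ℓ) (ω : Fin ℓ → α) :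
    StronglyConnectedWord ω ↔ ¬ ∃ a b : α, IsBridge ω a b :=
  stronglyConnected_iff_no_bridge_general ω
end

section
/- For every ℓ ≥ 1, every type α, and every word ω : Fin ℓ → α, the word-graph G_ω has no bridge if and only if ω has no disjoint split. -/
/-- `j` is a disjoint split of `ω`: `1 ≤ j < ℓ` and the prefix alphabet and suffix
alphabet at `j` are disjoint. -/
def DisjointSplit {ℓ : ℕ} {α : Type*} (ω : Fin ℓ → α) (j : ℕ) : Prop :=
  1 ≤ j ∧ j < ℓ ∧
    Disjoint {a | ∃ i : Fin ℓ, (i : ℕ) < j ∧ ω i = a}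
             {a | ∃ i : Fin ℓ, j ≤ (i : ℕ) ∧ ω i = a}

/-!
If `(a, b)` is a bridge, cut the word just after the first occurrence of `a b`: walking along the
word without crossing that occurrence connects every earlier letter to `a` and every later letter
to `b` in the graph without the edge, so a letter on both sides would connect `a` to `b`, and then
the whole alphabet would be connected. Conversely, at a disjoint split `j` the only adjacent pair
joining the two alphabets is `ω (j - 1), ω j`, so deleting that edge leaves the prefix alphabet
closed under adjacency.
-/

open Relation

namespace WordGraph

variable {ℓ : ℕ} {α : Type*} (ω : Fin ℓ → α)

def OccursAt (a b : α) (i : ℕ) : Prop :=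
  ∃ h : i + 1 < ℓ, ω ⟨i, Nat.lt_of_succ_lt h⟩ = a ∧ ω ⟨i + 1, h⟩ = b

def DeletedEdge (a b x y : α) : Prop :=
  WordEdge ω x y ∧ ¬(x = a ∧ y = b)

def prefixAlphabet (j : ℕ) : Set α :=
  {a | ∃ i : Fin ℓ, (i : ℕ) < j ∧ ω i = a}

variable {ω} {a b : α}

theorem isBridge_iff :
    IsBridge ω a b ↔ WordEdge ω a b ∧ ¬ WordEdge ω b a ∧
      ∃ c ∈ Set.range ω, ∃ d ∈ Set.range ω, ¬ EqvGen (DeletedEdge ω a b) c d := by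
  rw [IsBridge, ← EqvGen.reflTransGen_symmGen]
  rfl

theorem occursAt_or_eqvGen_deletedEdge {i : ℕ} (h : i + 1 < ℓ) :
    OccursAt ω a b i ∨ EqvGen (DeletedEdge ω a b) (ω ⟨i, Nat.lt_of_succ_lt h⟩) (ω ⟨i + 1, h⟩) := by
  by_cases heq : ω ⟨i, Nat.lt_of_succ_lt h⟩ = ω ⟨i + 1, h⟩
  · exact .inr (heq ▸ .refl _)
  by_cases hab : ω ⟨i, Nat.lt_of_succ_lt h⟩ = a ∧ ω ⟨i + 1, h⟩ = b
  · exact .inl ⟨h, hab⟩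
  · exact .inr (.rel _ _ ⟨⟨heq, i, h, rfl, rfl⟩, hab⟩)

theorem eqvGen_deletedEdge_of_forall_not_occursAt {i k : ℕ} (hik : i ≤ k) (hk : k < ℓ)
    (hocc : ∀ m, i ≤ m → m < k → ¬ OccursAt ω a b m) :
    EqvGen (DeletedEdge ω a b) (ω ⟨i, hik.trans_lt hk⟩) (ω ⟨k, hk⟩) := by
  induction k, hik using Nat.le_induction with
  | base => exact .refl _
  | succ k hik ih =>
    have hstep := (occursAt_or_eqvGen_deletedEdge hk).resolve_left (hocc k hik k.lt_succ_self)
    exact _root_.trans (ih (by omega) fun m him hmk => hocc m him (by omega)) hstep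

theorem eqvGen_deletedEdge_or_eqvGen_deletedEdge_of_le {i k : ℕ} (hik : i ≤ k) (hk : k < ℓ) :
    EqvGen (DeletedEdge ω a b) (ω ⟨i, hik.trans_lt hk⟩) (ω ⟨k, hk⟩) ∨
      EqvGen (DeletedEdge ω a b) b (ω ⟨k, hk⟩) := by
  induction k, hik using Nat.le_induction with
  | base => exact .inl (.refl _)
  | succ k hik ih =>
    rcases occursAt_or_eqvGen_deletedEdge (a := a) (b := b) hk with ⟨_, _, hb⟩ | hstep
    · exact .inr (hb ▸ .refl _)
    · exact (ih (by omega)).imp (_root_.trans · hstep) (_root_.trans · hstep)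

end WordGraph

open WordGraph

theorem IsBridge.exists_disjointSplit {ℓ : ℕ} {α : Type*} {ω : Fin ℓ → α} {a b : α}
    (h : IsBridge ω a b) : ∃ j, DisjointSplit ω j := by
  classical
  obtain ⟨⟨-, hocc⟩, -, _, ⟨p, rfl⟩, _, ⟨q, rfl⟩, hpq⟩ := isBridge_iff.1 h
  set i₀ := Nat.find hocc
  obtain ⟨hi₀, ha, hb⟩ : OccursAt ω a b i₀ := Nat.find_spec hocc
  have toA (p : ℕ) (hp : p ≤ i₀) : EqvGen (DeletedEdge ω a b) (ω ⟨p, by omega⟩) a := by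
    simpa only [ha] using
      eqvGen_deletedEdge_of_forall_not_occursAt hp (by omega) fun _ _ hm => Nat.find_min hocc hm
  have fromB (s : ℕ) (hs : i₀ + 1 ≤ s) (hsℓ : s < ℓ) :
      EqvGen (DeletedEdge ω a b) b (ω ⟨s, hsℓ⟩) := by
    simpa only [hb, or_self] using
      eqvGen_deletedEdge_or_eqvGen_deletedEdge_of_le (ω := ω) (a := a) (b := b) hs hsℓ
  have hab : ¬ EqvGen (DeletedEdge ω a b) a b := by
    intro hab
    have toAll (k : Fin ℓ) : EqvGen (DeletedEdge ω a b) a (ω k) :=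
      if hk : (k : ℕ) ≤ i₀ then symm (toA k hk) else _root_.trans hab (fromB k (by omega) k.2)
    exact hpq (_root_.trans (symm (toAll p)) (toAll q))
  refine ⟨i₀ + 1, by omega, hi₀, Set.disjoint_left.2 ?_⟩
  rintro _ ⟨p, hp, rfl⟩ ⟨s, hs, hsp⟩
  exact hab (_root_.trans (symm (toA p (by omega))) (symm (hsp ▸ fromB s hs s.2)))

namespace DisjointSplit

variable {ℓ : ℕ} {α : Type*} {ω : Fin ℓ → α} {j : ℕ} (hs : DisjointSplit ω j)
include hs

theorem apply_mem_prefixAlphabet_iff (i : Fin ℓ) : ω i ∈ prefixAlphabet ω j ↔ (i : ℕ) < j :=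
  ⟨fun hi => not_le.1 fun hji => Set.disjoint_left.1 hs.2.2 hi ⟨i, hji, rfl⟩,
    fun hi => ⟨i, hi, rfl⟩⟩

theorem isBridge :
    IsBridge ω (ω ⟨j - 1, (j.sub_le 1).trans_lt hs.2.1⟩) (ω ⟨j, hs.2.1⟩) := by
  have hj := hs.1
  have hjℓ := hs.2.1
  set a := ω ⟨j - 1, _⟩
  set b := ω ⟨j, hjℓ⟩
  have ha : a ∈ prefixAlphabet ω j := (hs.apply_mem_prefixAlphabet_iff _).2 (by dsimp only; omega)
  have hb : b ∉ prefixAlphabet ω j := fun h => lt_irrefl j ((hs.apply_mem_prefixAlphabet_iff _).1 h)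
  have hne : a ≠ b := fun h => hb (h ▸ ha)
  have hclosed {x y : α} (hxy : DeletedEdge ω a b x y) :
      x ∈ prefixAlphabet ω j ↔ y ∈ prefixAlphabet ω j := by
    obtain ⟨⟨-, i, hi, rfl, rfl⟩, hxy⟩ := hxy
    have hij : i + 1 ≠ j := fun hij =>
      hxy ⟨congrArg ω (Fin.ext (by dsimp only; omega)), congrArg ω (Fin.ext hij)⟩
    rw [hs.apply_mem_prefixAlphabet_iff, hs.apply_mem_prefixAlphabet_iff]
    dsimp only
    omega
  have : IsEquiv α (fun x y => x ∈ prefixAlphabet ω j ↔ y ∈ prefixAlphabet ω j) := ⟨⟩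
  have hab : ¬ EqvGen (DeletedEdge ω a b) a b := fun hab =>
    hb ((EqvGen.eqvGen_le (fun _ _ => hclosed) a b hab).1 ha)
  have hba : ¬ WordEdge ω b a := fun hba => hb ((hclosed ⟨hba, fun h => hne h.2⟩).2 ha)
  refine isBridge_iff.2 ⟨⟨hne, j - 1, by omega, rfl, congrArg ω (Fin.ext (by dsimp only; omega))⟩,
    hba, a, ⟨_, rfl⟩, b, ⟨_, rfl⟩, hab⟩

end DisjointSplit

theorem no_bridge_iff_no_disjointSplit_general {ℓ : ℕ} {α : Type*} (ω : Fin ℓ → α) :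
    (¬ ∃ a b : α, IsBridge ω a b) ↔ ¬ ∃ j : ℕ, DisjointSplit ω j :=
  not_congr ⟨fun ⟨_, _, h⟩ => h.exists_disjointSplit, fun ⟨_, hs⟩ => ⟨_, _, hs.isBridge⟩⟩

/-- A word-graph has no bridge iff the word has no disjoint split. -/
theorem no_bridge_iff_no_disjointSplit {ℓ : ℕ} {α : Type*} (hℓ : 1 ≤ ℓ) (ω : Fin ℓ → α) :
    (¬ ∃ a b : α, IsBridge ω a b) ↔ ¬ ∃ j : ℕ, DisjointSplit ω j :=
  no_bridge_iff_no_disjointSplit_general ω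
end

section
/- For every ℓ ≥ 1, every type α, and every word ω : Fin ℓ → α, the word-graph G_ω is strongly connected if and only if ω has no disjoint split. -/
/-- Forward reachability along the word. -/
lemma forward_reach {ℓ : ℕ} {α : Type*} (ω : Fin ℓ → α) :
    ∀ q : ℕ, ∀ hq : q < ℓ, ∀ p : ℕ, ∀ hp : p < ℓ, p ≤ q →
      Relation.ReflTransGen (WordEdge ω) (ω ⟨p, hp⟩) (ω ⟨q, hq⟩) := by
  intro q
  induction q with
  | zero =>
    intro hq p hp hpq
    interval_cases p
    exact Relation.ReflTransGen.refl
  | succ n ih =>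
    intro hq p hp hpq
    rcases Nat.lt_or_ge p (n + 1) with h | h
    · have hn : n < ℓ := Nat.lt_of_succ_lt hq
      refine (ih hn p hp (Nat.lt_succ_iff.mp h)).trans ?_
      by_cases he : ω ⟨n, hn⟩ = ω ⟨n + 1, hq⟩
      · rw [he]
      · exact Relation.ReflTransGen.single ⟨he, n, hq, rfl, rfl⟩
    · have : p = n + 1 := le_antisymm hpq h
      subst this
      exact Relation.ReflTransGen.refl

/-- If there is no disjoint split, every letter reaches `ω 0`. -/
lemma reach_zero {ℓ : ℕ} {α : Type*} (hℓ : 1 ≤ ℓ) (ω : Fin ℓ → α)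
    (hns : ¬ ∃ j : ℕ, DisjointSplit ω j) :
    ∀ p : ℕ, ∀ hp : p < ℓ,
      Relation.ReflTransGen (WordEdge ω) (ω ⟨p, hp⟩) (ω ⟨0, hℓ⟩) := by
  by_contra hcon
  push_neg at hcon
  obtain ⟨p, hp, hnp⟩ := hcon
  have hP : ∃ i : ℕ, ∃ hi : i < ℓ,
      ¬ Relation.ReflTransGen (WordEdge ω) (ω ⟨i, hi⟩) (ω ⟨0, hℓ⟩) := ⟨p, hp, hnp⟩
  classical
  set j := Nat.find hP with hj_def
  obtain ⟨hjℓ, hjn⟩ := Nat.find_spec hP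
  have hj1 : 1 ≤ j := by
    rcases Nat.eq_zero_or_pos j with h0 | h0
    · exfalso
      apply hjn
      have : (⟨j, hjℓ⟩ : Fin ℓ) = ⟨0, hℓ⟩ := by simp [h0]
      rw [this]
    · exact h0
  -- prefix letters reach ω 0
  have hpre : ∀ i : ℕ, i < j → ∀ hi : i < ℓ,
      Relation.ReflTransGen (WordEdge ω) (ω ⟨i, hi⟩) (ω ⟨0, hℓ⟩) := by
    intro i hij hi
    by_contra hc
    exact Nat.find_min hP hij ⟨hi, hc⟩
  -- suffix letters do not reach ω 0
  have hsuf : ∀ i : ℕ, j ≤ i → ∀ hi : i < ℓ,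
      ¬ Relation.ReflTransGen (WordEdge ω) (ω ⟨i, hi⟩) (ω ⟨0, hℓ⟩) := by
    intro i hji
    induction i, hji using Nat.le_induction with
    | base => intro hi; exact hjn
    | succ n hn ihn =>
      intro hn1 hr
      have hnℓ : n < ℓ := Nat.lt_of_succ_lt hn1
      apply ihn hnℓ
      by_cases he : ω ⟨n, hnℓ⟩ = ω ⟨n + 1, hn1⟩
      · rw [he]; exact hr
      · exact (Relation.ReflTransGen.single ⟨he, n, hn1, rfl, rfl⟩).trans hr
  apply hns
  refine ⟨j, hj1, hjℓ, Set.disjoint_left.mpr ?_⟩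
  rintro a ⟨i, hij, rfl⟩ ⟨k, hjk, hka⟩
  have h1 := hpre i hij i.isLt
  have h2 := hsuf k hjk k.isLt
  rw [show (⟨(k : ℕ), k.isLt⟩ : Fin ℓ) = k from rfl, hka] at h2
  exact h2 (by simpa using h1)

/-- A word-graph is strongly connected iff the word has no disjoint split. -/
theorem stronglyConnected_iff_no_disjointSplit {ℓ : ℕ} {α : Type*} (hℓ : 1 ≤ ℓ)
    (ω : Fin ℓ → α) :
    StronglyConnectedWord ω ↔ ¬ ∃ j : ℕ, DisjointSplit ω j := by
  constructor
  · rintro hsc ⟨j, hj1, hjℓ, hdisj⟩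
    have h0ℓ : 0 < ℓ := hℓ
    -- ω 0 is in the prefix set, ω j in the suffix set
    have haPre : ω ⟨0, h0ℓ⟩ ∈ {a | ∃ i : Fin ℓ, (i : ℕ) < j ∧ ω i = a} :=
      ⟨⟨0, h0ℓ⟩, hj1, rfl⟩
    have hbSuf : ω ⟨j, hjℓ⟩ ∈ {a | ∃ i : Fin ℓ, j ≤ (i : ℕ) ∧ ω i = a} :=
      ⟨⟨j, hjℓ⟩, le_refl j, rfl⟩
    -- reachability from a suffix letter stays in the suffix set
    have hclosed : ∀ c d : α,
        Relation.ReflTransGen (WordEdge ω) c d →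
        c ∈ {a | ∃ i : Fin ℓ, j ≤ (i : ℕ) ∧ ω i = a} →
        d ∈ {a | ∃ i : Fin ℓ, j ≤ (i : ℕ) ∧ ω i = a} := by
      intro c d hcd
      induction hcd with
      | refl => exact id
      | tail hxy hedge ih =>
        intro hc
        obtain ⟨_, i, hi, hx, hy⟩ := hedge
        have hxSuf := ih hc
        have hij : j ≤ i := by
          by_contra hlt
          push_neg at hlt
          exact Set.disjoint_left.mp hdisj ⟨⟨i, Nat.lt_of_succ_lt hi⟩, hlt, hx⟩ hxSuf
        exact ⟨⟨i + 1, hi⟩, Nat.le_succ_of_le hij, hy⟩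
    have hpath := hsc (ω ⟨j, hjℓ⟩) ⟨⟨j, hjℓ⟩, rfl⟩ (ω ⟨0, h0ℓ⟩) ⟨⟨0, h0ℓ⟩, rfl⟩
    exact Set.disjoint_left.mp hdisj haPre (hclosed _ _ hpath hbSuf)
  · intro hns
    rintro a ⟨p, rfl⟩ b ⟨q, rfl⟩
    have h1 : Relation.ReflTransGen (WordEdge ω) (ω p) (ω ⟨0, hℓ⟩) := by
      have := reach_zero hℓ ω hns p p.isLt
      simpa using this
    have h2 : Relation.ReflTransGen (WordEdge ω) (ω ⟨0, hℓ⟩) (ω q) := by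
      have := forward_reach ω q q.isLt 0 hℓ (Nat.zero_le q)
      simpa using this
    exact h1.trans h2
end

section
/- Let ℓ > n ≥ 1. The number of surjective words ω : Fin ℓ → Fin n whose word-graph G_ω is strongly connected equals n! · I(ℓ, n), where I(ℓ, n) is the number of irreducible n-partitions of Fin ℓ. -/
/-- An `n`-partition of `Fin ℓ` is reducible if some nonempty proper subset of its blocks
has union `{i : Fin ℓ | (i : ℕ) < j}` for some `1 ≤ j < ℓ`. -/
def Reducible {ℓ : ℕ} (P : Finpartition (Finset.univ : Finset (Fin ℓ))) : Prop :=
  ∃ j : ℕ, 1 ≤ j ∧ j < ℓ ∧ ∃ B : Finset (Finset (Fin ℓ)),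
    B.Nonempty ∧ B ⊂ P.parts ∧ B.sup id = Finset.univ.filter (fun i : Fin ℓ => (i : ℕ) < j)

/-- `S ℓ n`: the number of `n`-partitions of `Fin ℓ` (Stirling number of the second kind). -/
noncomputable def S (ℓ n : ℕ) : ℕ :=
  Nat.card {P : Finpartition (Finset.univ : Finset (Fin ℓ)) // P.parts.card = n}

/-- `I ℓ n`: the number of irreducible `n`-partitions of `Fin ℓ`. -/
noncomputable def I (ℓ n : ℕ) : ℕ :=
  Nat.card {P : Finpartition (Finset.univ : Finset (Fin ℓ)) // P.parts.card = n ∧ ¬ Reducible P}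

/-!
Call a position `j` with `1 ≤ j < ℓ` a cut of a word if no letter occurs both before `j` and at
or after `j`. The word-graph is strongly connected iff there is no cut: after a cut the letters
can never lead back to the first letter, and without cuts every letter leads back to the first one,
since below any position some letter reoccurs at or after it. The cuts of `ω` are exactly the
witnesses of reducibility of the partition of positions into the fibres of `ω`. Finally a surjective
word is the same as its fibre partition, which has `n` blocks, together with one of the `n!`
bijections from the blocks to the alphabet.
-/

open Finset Function

namespace Finpartition

variable {α : Type*} [DecidableEq α]

theorem part_injective {s : Finset α} : Injective (part : Finpartition s → α → Finset α) := by
  intro P Q h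
  have parts_eq_image (R : Finpartition s) : R.parts = s.image R.part := by
    ext t
    rw [Finset.mem_image]
    refine ⟨fun ht => ?_, ?_⟩
    · obtain ⟨a, ha, rfl⟩ := R.part_surjOn ht
      exact ⟨a, ha, rfl⟩
    · rintro ⟨a, ha, rfl⟩
      exact R.part_mem.2 ha
  ext1
  rw [parts_eq_image, parts_eq_image, h]

variable [Fintype α] (P : Finpartition (univ : Finset α))

def partOf (a : α) : P.parts :=
  ⟨P.part a, P.part_mem.2 (mem_univ a)⟩

theorem partOf_surjective : Surjective P.partOf := by
  rintro ⟨t, ht⟩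
  obtain ⟨a, -, rfl⟩ := P.part_surjOn ht
  exact ⟨a, rfl⟩

theorem mem_part_iff_partOf_eq {a b : α} : b ∈ P.part a ↔ P.partOf a = P.partOf b := by
  rw [partOf, partOf, Subtype.mk.injEq, eq_comm]
  exact P.mem_part_iff_part_eq_part (mem_univ b) (mem_univ a)

end Finpartition

section FiberPartition

variable {α β γ : Type*}

/-- Realised by `e ↦ e ∘ π`. -/
noncomputable def equivOfSameFibers {π : α → γ} (hπ : Surjective π) :
    {ω : α → β // Surjective ω ∧ ∀ a b, ω a = ω b ↔ π a = π b} ≃ (γ ≃ β) := by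
  refine (Equiv.ofBijective (fun e : γ ≃ β =>
    ⟨e ∘ π, e.surjective.comp hπ, fun a b => e.apply_eq_iff_eq⟩) ⟨?_, ?_⟩).symm
  · intro e e' h
    exact Equiv.coe_fn_injective (hπ.injective_comp_right (congrArg Subtype.val h))
  · rintro ⟨ω, hω, hfib⟩
    have hfactor : ∀ a, ω (surjInv hπ (π a)) = ω a := fun a =>
      (hfib _ _).2 (surjInv_eq hπ (π a))
    have hinj : Injective (ω ∘ surjInv hπ) := fun c c' h => by
      simpa only [surjInv_eq] using (hfib _ _).1 h
    have hsurj : Surjective (ω ∘ surjInv hπ) := fun b => by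
      obtain ⟨a, rfl⟩ := hω b
      exact ⟨π a, hfactor a⟩
    exact ⟨Equiv.ofBijective _ ⟨hinj, hsurj⟩, Subtype.ext (funext hfactor)⟩

variable [Fintype α] [DecidableEq α] [DecidableEq β]

instance (ω : α → β) : DecidableRel (Setoid.ker ω).r :=
  fun a b => decEq (ω a) (ω b)

def fiberPartition (ω : α → β) : Finpartition (univ : Finset α) :=
  Finpartition.ofSetoid (Setoid.ker ω)

theorem mem_part_fiberPartition {ω : α → β} {a b : α} :
    b ∈ (fiberPartition ω).part a ↔ ω a = ω b :=
  Finpartition.mem_part_ofSetoid_iff_rel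

theorem fiberPartition_eq_iff {ω : α → β} {P : Finpartition (univ : Finset α)} :
    fiberPartition ω = P ↔ ∀ a b, ω a = ω b ↔ P.partOf a = P.partOf b := by
  constructor
  · rintro rfl a b
    rw [← mem_part_fiberPartition, Finpartition.mem_part_iff_partOf_eq]
  · refine fun h => Finpartition.part_injective (funext fun a => ?_)
    ext b
    rw [mem_part_fiberPartition, h, Finpartition.mem_part_iff_partOf_eq]

noncomputable def fiberPartitionEquiv (P : Finpartition (univ : Finset α)) :
    {ω : α → β // Surjective ω ∧ fiberPartition ω = P} ≃ (P.parts ≃ β) :=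
  (Equiv.subtypeEquivRight fun _ => and_congr_right' fiberPartition_eq_iff).trans
    (equivOfSameFibers P.partOf_surjective)

variable [Fintype β]

theorem card_parts_fiberPartition {ω : α → β} (hω : Surjective ω) :
    #(fiberPartition ω).parts = Fintype.card β := by
  rw [← Fintype.card_coe]
  exact Fintype.card_congr (fiberPartitionEquiv _ ⟨ω, hω, rfl⟩)

theorem card_surjective_fiberPartition (Q : Finpartition (univ : Finset α) → Prop) :
    Nat.card {ω : α → β // Surjective ω ∧ Q (fiberPartition ω)} =
      (Fintype.card β).factorial *
        Nat.card {P : Finpartition (univ : Finset α) // #P.parts = Fintype.card β ∧ Q P} := by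
  classical
  let F (ω : {ω : α → β // Surjective ω ∧ Q (fiberPartition ω)}) :
      {P : Finpartition (univ : Finset α) // #P.parts = Fintype.card β ∧ Q P} :=
    ⟨fiberPartition ω.1, card_parts_fiberPartition ω.2.1, ω.2.2⟩
  have card_fiber : ∀ P, Nat.card {ω // F ω = P} = (Fintype.card β).factorial := by
    rintro ⟨P, hcard, hQ⟩
    have e : {ω // F ω = ⟨P, hcard, hQ⟩} ≃ (P.parts ≃ β) :=
      ((Equiv.subtypeEquivRight fun _ => Subtype.ext_iff).trans
        ((Equiv.subtypeSubtypeEquivSubtypeInter _ (fiberPartition · = P)).trans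
          (Equiv.subtypeEquivRight fun ω => by
            constructor
            · exact fun h => ⟨h.1.1, h.2⟩
            · rintro ⟨hω, rfl⟩
              exact ⟨⟨hω, hQ⟩, rfl⟩))).trans
      (fiberPartitionEquiv P)
    rw [Nat.card_congr e, Nat.card_eq_fintype_card,
      Fintype.card_equiv (P.parts.equivFinOfCardEq hcard |>.trans (Fintype.equivFin β).symm),
      Fintype.card_coe, hcard]
  rw [← Nat.card_congr (Equiv.sigmaFiberEquiv F), Nat.card_sigma]
  simp only [card_fiber, sum_const, card_univ, Nat.card_eq_fintype_card, smul_eq_mul, mul_comm]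

end FiberPartition

section Words

variable {ℓ : ℕ} {α β : Type*}

def IsCut (ω : Fin ℓ → α) (j : ℕ) : Prop :=
  1 ≤ j ∧ j < ℓ ∧ ∀ i₁ i₂ : Fin ℓ, (i₁ : ℕ) < j → j ≤ (i₂ : ℕ) → ω i₁ ≠ ω i₂

theorem isCut_congr {ω : Fin ℓ → α} {ω' : Fin ℓ → β} (h : ∀ a b, ω a = ω b ↔ ω' a = ω' b)
    {j : ℕ} : IsCut ω j ↔ IsCut ω' j := by
  simp only [IsCut, ne_eq, h]

theorem reflTransGen_wordEdge_of_le (ω : Fin ℓ → α) {i k : Fin ℓ} (hik : i ≤ k) :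
    Relation.ReflTransGen (WordEdge ω) (ω i) (ω k) := by
  obtain ⟨i, hi⟩ := i
  obtain ⟨k, hk⟩ := k
  induction k, Fin.mk_le_mk.1 hik using Nat.le_induction with
  | base => rfl
  | succ k _ ih =>
    refine (ih (by omega) (Fin.mk_le_mk.2 (by omega))).trans ?_
    by_cases he : ω ⟨k, by omega⟩ = ω ⟨k + 1, hk⟩
    · rw [he]
    · exact .single ⟨he, k, hk, rfl, rfl⟩

theorem le_of_reflTransGen_wordEdge_of_isCut {ω : Fin ℓ → α} {j : ℕ} (hcut : IsCut ω j)
    {a b : α} (hab : Relation.ReflTransGen (WordEdge ω) a b)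
    (ha : ∀ i, ω i = a → j ≤ (i : ℕ)) : ∀ i, ω i = b → j ≤ (i : ℕ) := by
  induction hab with
  | refl => exact ha
  | tail _ hedge ih =>
    obtain ⟨-, m, hm, hma, hmb⟩ := hedge
    have hjm : j ≤ m := ih _ hma
    intro i hib
    by_contra hij
    exact hcut.2.2 i ⟨m + 1, hm⟩ (by omega) (by simp; omega) (hib.trans hmb.symm)

theorem stronglyConnectedWord_iff_forall_not_isCut (ω : Fin ℓ → α) :
    StronglyConnectedWord ω ↔ ∀ j, ¬ IsCut ω j := by
  constructor
  · intro hsc j hcut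
    have hℓ : 0 < ℓ := (Nat.zero_le j).trans_lt hcut.2.1
    have h0 : j ≤ 0 := le_of_reflTransGen_wordEdge_of_isCut hcut
      (hsc _ ⟨⟨j, hcut.2.1⟩, rfl⟩ _ ⟨⟨0, hℓ⟩, rfl⟩)
      (fun i hi => by_contra fun hij => hcut.2.2 i _ (by omega) le_rfl hi) ⟨0, hℓ⟩ rfl
    exact absurd hcut.1 (by omega)
  · rintro hcut _ ⟨i, rfl⟩ _ ⟨k, rfl⟩
    have to_first : ∀ k : Fin ℓ, Relation.ReflTransGen (WordEdge ω) (ω k) (ω ⟨0, k.pos⟩) := by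
      rintro ⟨k, hk⟩
      induction k using Nat.strong_induction_on with
      | _ k ih =>
        rcases Nat.eq_zero_or_pos k with rfl | hk0
        · rfl
        · have : ¬ IsCut ω k := hcut k
          simp only [IsCut, not_and, not_forall, not_not] at this
          obtain ⟨i₁, i₂, h₁, h₂, heq⟩ := this hk0 hk
          refine (reflTransGen_wordEdge_of_le ω (i := ⟨k, hk⟩) (k := i₂) h₂).trans ?_
          rw [← heq]
          exact ih i₁ h₁ i₁.2
    exact (to_first i).trans (reflTransGen_wordEdge_of_le ω (Fin.mk_le_mk.2 (Nat.zero_le k)))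

theorem reducible_iff_exists_isCut (P : Finpartition (univ : Finset (Fin ℓ))) :
    Reducible P ↔ ∃ j, IsCut P.partOf j := by
  constructor
  · rintro ⟨j, hj1, hjℓ, B, -, hBP, hB⟩
    refine ⟨j, hj1, hjℓ, fun i₁ i₂ h₁ h₂ heq => ?_⟩
    have hi₁ : i₁ ∈ B.sup id := by rw [hB, mem_filter]; exact ⟨mem_univ _, h₁⟩
    obtain ⟨t, htB, hi₁t⟩ := mem_sup.1 hi₁
    have hi₂t : i₂ ∈ t := P.part_eq_of_mem (hBP.subset htB) hi₁t ▸ P.mem_part_iff_partOf_eq.2 heq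
    have : i₂ ∈ B.sup id := mem_sup.2 ⟨t, htB, hi₂t⟩
    rw [hB, mem_filter] at this
    omega
  · rintro ⟨j, hj1, hjℓ, hcut⟩
    have part_subset_iff :
        ∀ i, P.part i ⊆ univ.filter (fun i : Fin ℓ => (i : ℕ) < j) ↔ (i : ℕ) < j := by
      intro i
      refine ⟨fun h => by simpa using h (P.mem_part (mem_univ i)), fun hi b hb => ?_⟩
      rw [mem_filter]
      by_contra hbj
      exact hcut i b hi (by simp at hbj; omega) (P.mem_part_iff_partOf_eq.1 hb)
    refine ⟨j, hj1, hjℓ, P.parts.filter (· ⊆ univ.filter (fun i : Fin ℓ => (i : ℕ) < j)),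
      ⟨P.part ⟨0, by omega⟩, mem_filter.2 ⟨P.part_mem.2 (mem_univ _), (part_subset_iff _).2 hj1⟩⟩,
      filter_ssubset.2 ⟨P.part ⟨j, hjℓ⟩, P.part_mem.2 (mem_univ _), by rw [part_subset_iff]; simp⟩,
      ?_⟩
    ext i
    simp only [mem_sup, mem_filter, id]
    exact ⟨fun ⟨t, ⟨_, hts⟩, hit⟩ => mem_filter.1 (hts hit),
      fun hi => ⟨P.part i, ⟨P.part_mem.2 (mem_univ i), (part_subset_iff i).2 (by simpa using hi)⟩,
        P.mem_part (mem_univ i)⟩⟩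

theorem stronglyConnectedWord_iff_not_reducible [DecidableEq β] (ω : Fin ℓ → β) :
    StronglyConnectedWord ω ↔ ¬ Reducible (fiberPartition ω) := by
  rw [stronglyConnectedWord_iff_forall_not_isCut, reducible_iff_exists_isCut, not_exists]
  exact forall_congr' fun j => not_congr (isCut_congr (fiberPartition_eq_iff.1 rfl))

end Words

theorem card_stronglyConnected_words_general (ℓ n : ℕ) :
    Nat.card {ω : Fin ℓ → Fin n // Function.Surjective ω ∧ StronglyConnectedWord ω}
      = n.factorial * I ℓ n := by
  have h := card_surjective_fiberPartition (α := Fin ℓ) (β := Fin n) (¬ Reducible ·)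
  rw [Fintype.card_fin] at h
  rw [I, ← h]
  exact Nat.card_congr (Equiv.subtypeEquivRight fun ω =>
    and_congr_right' (stronglyConnectedWord_iff_not_reducible ω))

/-- For `ℓ > n ≥ 1`, the number of surjective words `Fin ℓ → Fin n` with strongly
connected word-graph is `n! · I(ℓ, n)`. -/
theorem card_stronglyConnected_words (ℓ n : ℕ) (hn : 1 ≤ n) (hℓ : n < ℓ) :
    Nat.card {ω : Fin ℓ → Fin n // Function.Surjective ω ∧ StronglyConnectedWord ω}
      = n.factorial * I ℓ n :=
  card_stronglyConnected_words_general ℓ n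
end

section
/- Let ℓ ≥ 2 and n ≥ 1. The map sending an n-partition p of the set {0, 1, …, ℓ−2} (the first ℓ−1 elements of Fin ℓ) to the n-partition of Fin ℓ obtained by inserting the element ℓ−1 into the block of p that contains 0 is a bijection from the set of all n-partitions of {0, …, ℓ−2} onto the set of irreducible n-partitions of Fin ℓ in which 0 and ℓ−1 lie in the same block. In particular, the number of irreducible n-partitions of Fin ℓ in which 0 and ℓ−1 lie in the same block equals S(ℓ−1, n). -/
/-!
Deleting `ℓ - 1` from its block inverts the insertion: since `0` stays in that block, no block
disappears, so the number of blocks is preserved both ways. Irreducibility comes for free: a union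
of blocks equal to `{i | i < j}` with `j ≥ 1` contains `0`, hence the whole block of `0`, hence
`ℓ - 1`, which forces `j = ℓ`. The count is then `S(ℓ-1, n)` after identifying `{0, …, ℓ-2}` with
`Fin (ℓ - 1)`.
-/

open Finset

lemma Finset.map_preimage_of_subset_map {α β : Type*} {f : α ↪ β} {s : Finset α} {t : Finset β}
    (ht : t ⊆ s.map f) : (t.preimage f f.injective.injOn).map f = t := by
  obtain ⟨u, -, rfl⟩ := subset_map_iff.1 ht
  rw [preimage_map]

namespace Finpartition

variable {α β : Type*} [DecidableEq α] [DecidableEq β]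

noncomputable def mapEmbeddingEquiv (f : α ↪ β) (s : Finset α) :
    Finpartition s ≃ Finpartition (s.map f) where
  toFun P :=
    { parts := P.parts.map (mapEmbedding f).toEmbedding
      supIndep := by
        rw [supIndep_iff_pairwiseDisjoint, coe_map]
        rintro _ ⟨b, hb, rfl⟩ _ ⟨c, hc, rfl⟩ hbc
        exact (disjoint_map f).2 (P.disjoint hb hc (ne_of_apply_ne _ hbc))
      sup_parts := by
        conv_rhs => rw [← P.sup_parts]
        ext y
        simp only [mem_sup, mem_map, id]
        aesop
      bot_notMem := by simp }
  invFun Q :=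
    { parts := Q.parts.image fun t => t.preimage f f.injective.injOn
      supIndep := by
        rw [supIndep_iff_pairwiseDisjoint, coe_image]
        rintro _ ⟨b, hb, rfl⟩ _ ⟨c, hc, rfl⟩ hbc
        exact disjoint_preimage (hs := f.injective.injOn) (ht := f.injective.injOn)
          (Q.disjoint hb hc fun h => hbc (by rw [h]))
      sup_parts := by
        ext x
        have hx : f x ∈ Q.parts.sup id ↔ x ∈ s := by rw [Q.sup_parts, mem_map']
        simpa [mem_sup] using hx
      bot_notMem := by
        simp only [bot_eq_empty, mem_image, not_exists, not_and]
        intro t ht h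
        apply Q.ne_empty ht
        rw [← map_preimage_of_subset_map (Q.le ht), h, map_empty] }
  left_inv P := by
    ext t
    simp [preimage_map]
  right_inv Q := by
    ext t
    simp only [mem_map, mem_image, RelEmbedding.coe_toEmbedding, mapEmbedding_apply]
    constructor
    · rintro ⟨_, ⟨u, hu, rfl⟩, rfl⟩
      rwa [map_preimage_of_subset_map (Q.le hu)]
    · exact fun ht => ⟨_, ⟨t, ht, rfl⟩, map_preimage_of_subset_map (Q.le ht)⟩

@[simp] lemma card_parts_mapEmbeddingEquiv (f : α ↪ β) (s : Finset α) (P : Finpartition s) :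
    #(mapEmbeddingEquiv f s P).parts = #P.parts :=
  card_map _

section InsertIntoPart

variable {s t : Finset α} {a : α}

def insertIntoPart (P : Finpartition s) (ha : a ∉ s) (hst : insert a s = t) {b : Finset α}
    (hb : b ∈ P.parts) : Finpartition t where
  parts := insert (insert a b) (P.parts.erase b)
  supIndep := by
    rw [supIndep_iff_pairwiseDisjoint, coe_insert]
    refine (P.disjoint.subset (erase_subset _ _)).insert fun c hc _ => ?_
    obtain ⟨hcb, hc⟩ := mem_erase.1 hc
    exact disjoint_insert_left.2 ⟨fun h => ha (P.le hc h), P.disjoint hb hc hcb.symm⟩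
  sup_parts := by
    subst hst
    conv_rhs => rw [← P.sup_parts, ← insert_erase hb, sup_insert]
    rw [sup_insert, id, id, sup_eq_union, sup_eq_union, insert_union]
  bot_notMem := by
    rw [bot_eq_empty, mem_insert, not_or]
    exact ⟨(insert_ne_empty _ _).symm, fun h => P.bot_notMem (mem_of_mem_erase h)⟩

def eraseFromPart (Q : Finpartition t) (ha : a ∉ s) (hst : insert a s = t) {c : Finset α}
    (hc : c ∈ Q.parts) (hac : a ∈ c) (hne : (c.erase a).Nonempty) : Finpartition s where
  parts := insert (c.erase a) (Q.parts.erase c)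
  supIndep := by
    rw [supIndep_iff_pairwiseDisjoint, coe_insert]
    refine (Q.disjoint.subset (erase_subset _ _)).insert fun d hd _ => ?_
    obtain ⟨hdc, hd⟩ := mem_erase.1 hd
    exact (Q.disjoint hc hd hdc.symm).mono_left (erase_subset _ _)
  sup_parts := by
    have hR : a ∉ (Q.parts.erase c).sup id := by
      simp only [mem_sup, mem_erase, id, not_exists, not_and]
      exact fun d hd had => hd.1 (Q.eq_of_mem_parts hd.2 hc had hac)
    have hsplit : c ∪ (Q.parts.erase c).sup id = t := by
      conv_rhs => rw [← Q.sup_parts, ← insert_erase hc, sup_insert]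
      rfl
    rw [sup_insert, id, sup_eq_union, ← erase_eq_of_notMem hR, ← erase_union_distrib, hsplit,
      ← hst, erase_insert ha]
  bot_notMem := by
    rw [bot_eq_empty, mem_insert, not_or]
    exact ⟨hne.ne_empty.symm, fun h => Q.bot_notMem (mem_of_mem_erase h)⟩

lemma card_parts_insertIntoPart (P : Finpartition s) (ha : a ∉ s) (hst : insert a s = t)
    {b : Finset α} (hb : b ∈ P.parts) : #(P.insertIntoPart ha hst hb).parts = #P.parts := by
  have hnew : insert a b ∉ P.parts.erase b := fun h =>
    ha (P.le (mem_of_mem_erase h) (mem_insert_self _ _))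
  rw [insertIntoPart, card_insert_of_notMem hnew, card_erase_add_one hb]

lemma image_erase_parts_insertIntoPart (P : Finpartition s) (ha : a ∉ s) (hst : insert a s = t)
    {b : Finset α} (hb : b ∈ P.parts) :
    (P.insertIntoPart ha hst hb).parts.image (·.erase a) = P.parts := by
  have hP : ∀ c ∈ P.parts, c.erase a = c := fun c hc =>
    erase_eq_of_notMem fun h => ha (P.le hc h)
  rw [insertIntoPart, image_insert, erase_insert_eq_erase, hP b hb,
    image_congr fun c hc => hP c (mem_of_mem_erase hc), image_id', insert_erase hb]

lemma insertIntoPart_eraseFromPart (Q : Finpartition t) (ha : a ∉ s) (hst : insert a s = t)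
    {c : Finset α} (hc : c ∈ Q.parts) (hac : a ∈ c) (hne : (c.erase a).Nonempty) {b : Finset α}
    (hb : b ∈ (Q.eraseFromPart ha hst hc hac hne).parts) (hbc : b = c.erase a) :
    (Q.eraseFromPart ha hst hc hac hne).insertIntoPart ha hst hb = Q := by
  subst hbc
  have hnew : c.erase a ∉ Q.parts.erase c := fun h => by
    obtain ⟨hne', h⟩ := mem_erase.1 h
    obtain ⟨x, hx⟩ := hne
    exact hne' (Q.eq_of_mem_parts h hc hx (mem_of_mem_erase hx))
  ext1
  dsimp only [insertIntoPart, eraseFromPart]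
  rw [insert_erase hac, erase_insert hnew, insert_erase hc]

theorem bijOn_insertIntoPart_part {x : α} (hx : x ∈ s) (ha : a ∉ s) (hst : insert a s = t)
    (n : ℕ) :
    Set.BijOn (fun P : Finpartition s => P.insertIntoPart ha hst (P.part_mem.2 hx))
      {P | #P.parts = n} {Q | #Q.parts = n ∧ ∃ c ∈ Q.parts, x ∈ c ∧ a ∈ c} := by
  refine ⟨fun P hP => ⟨?_, ?_⟩, fun P _ P' _ h => ?_, fun Q ⟨hQ, c, hc, hxc, hac⟩ => ?_⟩
  · rwa [card_parts_insertIntoPart]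
  · exact ⟨_, mem_insert_self _ _, mem_insert_of_mem (P.mem_part_self.2 hx), mem_insert_self _ _⟩
  · ext1
    simpa only [image_erase_parts_insertIntoPart] using congrArg (·.parts.image (·.erase a)) h
  · have hxa : x ∈ c.erase a := mem_erase.2 ⟨ne_of_mem_of_not_mem hx ha, hxc⟩
    set P := Q.eraseFromPart ha hst hc hac ⟨x, hxa⟩
    have hPQ : P.insertIntoPart ha hst (P.part_mem.2 hx) = Q :=
      insertIntoPart_eraseFromPart Q ha hst hc hac _ _
        (P.part_eq_of_mem (mem_insert_self _ _) hxa)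
    refine ⟨P, ?_, hPQ⟩
    show #P.parts = n
    rw [← card_parts_insertIntoPart P ha hst (P.part_mem.2 hx), hPQ, hQ]

end InsertIntoPart

end Finpartition

theorem not_reducible_of_first_last_mem_part {ℓ : ℕ} {q : Finpartition (univ : Finset (Fin ℓ))}
    {c : Finset (Fin ℓ)} (hc : c ∈ q.parts) {i k : Fin ℓ} (hi : (i : ℕ) = 0)
    (hk : (k : ℕ) = ℓ - 1) (hic : i ∈ c) (hkc : k ∈ c) : ¬Reducible q := by
  rintro ⟨j, hj, hjℓ, B, -, hB, hBsup⟩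
  have hiB : i ∈ B.sup id := by
    rw [hBsup, mem_filter]
    exact ⟨mem_univ _, by omega⟩
  obtain ⟨b, hbB, hib⟩ := mem_sup.1 hiB
  obtain rfl : b = c := q.eq_of_mem_parts (hB.subset hbB) hc hib hic
  have hkB : k ∈ B.sup id := le_sup (f := id) hbB hkc
  simp only [hBsup, mem_filter, mem_univ, true_and] at hkB
  omega

lemma Fin.map_castLEEmb_univ {m ℓ : ℕ} (h : m ≤ ℓ) :
    (univ : Finset (Fin m)).map (Fin.castLEEmb h) = univ.filter fun i : Fin ℓ => (i : ℕ) < m := by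
  apply coe_injective
  simp [Fin.range_castLE]

theorem card_finpartition_filter_lt {m ℓ : ℕ} (h : m ≤ ℓ) (n : ℕ) :
    Nat.card {P : Finpartition (univ.filter fun i : Fin ℓ => (i : ℕ) < m) // #P.parts = n} =
      S m n := by
  rw [← Fin.map_castLEEmb_univ h, S]
  exact Nat.card_congr ((Finpartition.mapEmbeddingEquiv _ _).subtypeEquiv fun P => by
    rw [Finpartition.card_parts_mapEmbeddingEquiv]).symm

/-- Inserting the element `ℓ - 1` into the block containing `0` is a bijection from the
`n`-partitions of `{0, …, ℓ-2}` onto the irreducible `n`-partitions of `Fin ℓ` in which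
`0` and `ℓ - 1` lie in the same block; in particular the number of the latter is
`S(ℓ-1, n)`. -/
theorem insert_last_bijection (ℓ n : ℕ) (hℓ : 2 ≤ ℓ) :
    (∃ f : Finpartition (Finset.univ.filter fun i : Fin ℓ => (i : ℕ) < ℓ - 1) →
           Finpartition (Finset.univ : Finset (Fin ℓ)),
      (∀ p b, b ∈ p.parts → (⟨0, by omega⟩ : Fin ℓ) ∈ b →
        (f p).parts = insert (insert (⟨ℓ - 1, by omega⟩ : Fin ℓ) b) (p.parts.erase b)) ∧
      Set.BijOn f {p | p.parts.card = n}
        {q | q.parts.card = n ∧ ¬ Reducible q ∧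
          ∃ c ∈ q.parts, (⟨0, by omega⟩ : Fin ℓ) ∈ c ∧ (⟨ℓ - 1, by omega⟩ : Fin ℓ) ∈ c}) ∧
    Nat.card {q : Finpartition (Finset.univ : Finset (Fin ℓ)) //
        q.parts.card = n ∧ ¬ Reducible q ∧
        ∃ c ∈ q.parts, (⟨0, by omega⟩ : Fin ℓ) ∈ c ∧ (⟨ℓ - 1, by omega⟩ : Fin ℓ) ∈ c}
      = S (ℓ - 1) n := by
  set s := univ.filter fun i : Fin ℓ => (i : ℕ) < ℓ - 1
  set z : Fin ℓ := ⟨0, by omega⟩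
  set L : Fin ℓ := ⟨ℓ - 1, by omega⟩
  have hz : z ∈ s := by simp [s, z]; omega
  have hL : L ∉ s := by simp [s, L]
  have hst : insert L s = univ := by ext i; simp [s, L, Fin.ext_iff]; omega
  have hirr : {q : Finpartition (univ : Finset (Fin ℓ)) |
      #q.parts = n ∧ ¬Reducible q ∧ ∃ c ∈ q.parts, z ∈ c ∧ L ∈ c} =
      {q | #q.parts = n ∧ ∃ c ∈ q.parts, z ∈ c ∧ L ∈ c} := by
    ext q
    refine and_congr_right fun _ => and_iff_right_of_imp fun ⟨c, hc, hzc, hLc⟩ => ?_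
    exact not_reducible_of_first_last_mem_part hc rfl rfl hzc hLc
  have hbij := Finpartition.bijOn_insertIntoPart_part hz hL hst n
  rw [← hirr] at hbij
  refine ⟨⟨_, fun p b hb hzb => ?_, hbij⟩, ?_⟩
  · rw [← p.part_eq_of_mem hb hzb]
    rfl
  · exact (Nat.card_congr (hbij.equiv _).symm).trans (card_finpartition_filter_lt (by omega) n)
end

section
/- Let ℓ ≥ 2, let α be a type, let ω : Fin ℓ → α be a word, and suppose j with 1 ≤ j < ℓ is a disjoint split of ω. Then the ordered pair (ω (j−1), ω j) is a bridge of the word-graph G_ω. -/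
/-- If `j` is a disjoint split of `ω` then `(ω (j-1), ω j)` is a bridge of the word-graph. -/
theorem disjointSplit_gives_bridge {ℓ : ℕ} {α : Type*} (hℓ : 2 ≤ ℓ) (ω : Fin ℓ → α)
    (j : ℕ) (hj1 : 1 ≤ j) (hj2 : j < ℓ) (hsplit : DisjointSplit ω j) :
    IsBridge ω (ω ⟨j - 1, by omega⟩) (ω ⟨j, hj2⟩) := by
  obtain ⟨-, -, hdisj⟩ := hsplit
  set a := ω ⟨j - 1, by omega⟩ with ha
  set b := ω ⟨j, hj2⟩ with hb
  set P : Set α := {a | ∃ i : Fin ℓ, (i : ℕ) < j ∧ ω i = a} with hP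
  set S : Set α := {a | ∃ i : Fin ℓ, j ≤ (i : ℕ) ∧ ω i = a} with hS
  have haP : a ∈ P := ⟨⟨j - 1, by omega⟩, by show j - 1 < j; omega, rfl⟩
  have hbS : b ∈ S := ⟨⟨j, hj2⟩, le_refl _, rfl⟩
  have hdisj' : ∀ x, x ∈ P → x ∉ S := fun x hx => Set.disjoint_left.mp hdisj hx
  have hne : a ≠ b := fun h => hdisj' a haP (by rw [h]; exact hbS)
  have key : ∀ x y, WordEdge ω x y → (x = a ∧ y = b) ∨ (x ∈ P ∧ y ∈ P) ∨ (x ∈ S ∧ y ∈ S) := by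
    rintro x y ⟨-, i, h, hx, hy⟩
    rcases lt_trichotomy (i + 1) j with hc | hc | hc
    · exact Or.inr (Or.inl ⟨⟨⟨i, by omega⟩, by show i < j; omega, hx⟩,
        ⟨⟨i + 1, h⟩, by show i + 1 < j; omega, hy⟩⟩)
    · refine Or.inl ⟨?_, ?_⟩
      · rw [← hx, ha]; congr 1; simp only [Fin.mk.injEq]; omega
      · rw [← hy, hb]; congr 1; simp only [Fin.mk.injEq]; omega
    · exact Or.inr (Or.inr ⟨⟨⟨i, by omega⟩, by show j ≤ i; omega, hx⟩,
        ⟨⟨i + 1, h⟩, by show j ≤ i + 1; omega, hy⟩⟩)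
  refine ⟨⟨hne, j - 1, by omega, rfl, by rw [hb]; congr 1; simp only [Fin.mk.injEq]; omega⟩,
    ?_, ?_⟩
  · rintro hba
    rcases key b a hba with ⟨h1, h2⟩ | ⟨h1, -⟩ | ⟨-, h2⟩
    · exact hne (h2.symm ▸ h1 ▸ rfl)
    · exact hdisj' b h1 hbS
    · exact hdisj' a haP h2
  · refine ⟨a, ⟨_, rfl⟩, b, ⟨_, rfl⟩, fun hpath => ?_⟩
    have step : ∀ x y, ((WordEdge ω x y ∧ ¬(x = a ∧ y = b)) ∨
        (WordEdge ω y x ∧ ¬(y = a ∧ x = b))) → x ∈ P → y ∈ P := by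
      rintro x y (⟨he, hne'⟩ | ⟨he, hne'⟩) hxP
      · rcases key x y he with h | ⟨-, h⟩ | ⟨h, -⟩
        · exact absurd h hne'
        · exact h
        · exact absurd (hdisj' x hxP h) (fun f => f)
      · rcases key y x he with h | ⟨h, -⟩ | ⟨-, h⟩
        · exact absurd h hne'
        · exact h
        · exact absurd (hdisj' x hxP h) (fun f => f)
    have gen : ∀ z, Relation.ReflTransGen
        (fun x y => (WordEdge ω x y ∧ ¬(x = a ∧ y = b)) ∨
                    (WordEdge ω y x ∧ ¬(y = a ∧ x = b))) a z → z ∈ P := by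
      intro z hz
      induction hz with
      | refl => exact haP
      | tail _ hstep ih => exact step _ _ hstep ih
    exact hdisj' b (gen b hpath) hbS
end
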